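/- Let k be a field, A a finite-dimensional central simple k-algebra, and F ⊆ A a commutative étale k-subalgebra with (dim_k F)² = dim_k A (a maximal commutative separable subalgebra). If the cardinality of k is strictly greater than dim_k A (in particular, if k is infinite), then there exists v ∈ A such that the k-linear map F ⊗[k] F → A sending f₁ ⊗ f₂ to f₁·v·f₂ is bijective. -/

import Mathlib

/-!
Since `F` is étale, `B = F ⊗[k] F` is a reduced Artinian ring, i.e. a finite product of fields
`∏ B ⧸ I`. For a central simple algebra `A` the map `A ⊗ Aᵐᵒᵖ → End_k A`, `a ⊗ b ↦ (x ↦ a x b)`,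
is injective (Artin–Whaples: a relation `∑ xᵢ a yᵢ = 0` with the `yᵢ` independent can be
normalised to `xⱼ = 1`, after which commutators give a shorter relation, forcing all `xᵢ`
central). Hence `A` is a faithful `B`-module via `f₁ ⊗ f₂ ↦ (a ↦ f₁ a f₂)`. Choosing `v` with
nonzero component in every factor `B ⧸ I` makes `t ↦ t • v = Phi v t` injective, and
`(dim F)² = dim A` makes it bijective.
-/

open TensorProduct

universe u

variable (k F A : Type u) [Field k] [CommRing F] [Algebra k F] [Ring A] [Algebra k A]

/-- The `k`-linear map `F ⊗ F → A`, `f₁ ⊗ f₂ ↦ ι(f₁)·v·ι(f₂)`, where `ι : F → A` realises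
`F` as a subalgebra of `A`. -/
noncomputable def Phi (ι : F →ₐ[k] A) (v : A) : F ⊗[k] F →ₗ[k] A :=
  TensorProduct.lift <| LinearMap.mk₂ k (fun r₁ r₂ => ι r₁ * v * ι r₂)
    (by intro m₁ m₂ n; simp [add_mul])
    (by intro c m n; simp [smul_mul_assoc])
    (by intro m n₁ n₂; simp [mul_add])
    (by intro c m n; simp [mul_smul_comm])

section CentralSimple

variable {K D : Type*} [Field K] [Ring D] [Algebra K D]

theorem IsSimpleRing.exists_sum_mul_mul_eq_zero_and_eq_one [IsSimpleRing D] {ι : Type*} [Fintype ι]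
    {x y : ι → D} (h : ∀ a, ∑ i, x i * a * y i = 0) {j : ι} (hj : x j ≠ 0) :
    ∃ x' : ι → D, (∀ a, ∑ i, x' i * a * y i = 0) ∧ x' j = 1 := by
  let I : TwoSidedIdeal D := .mk' {z | ∃ x' : ι → D, (∀ a, ∑ i, x' i * a * y i = 0) ∧ x' j = z}
    ⟨0, by simp, rfl⟩
    (by
      rintro _ _ ⟨x₁, h₁, rfl⟩ ⟨x₂, h₂, rfl⟩
      exact ⟨x₁ + x₂, fun a => by simp [add_mul, Finset.sum_add_distrib, h₁, h₂], rfl⟩)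
    (by
      rintro _ ⟨x₁, h₁, rfl⟩
      exact ⟨-x₁, fun a => by simp [h₁], rfl⟩)
    (by
      rintro u _ ⟨x₁, h₁, rfl⟩
      exact ⟨fun i => u * x₁ i, fun a => by
        simpa [mul_assoc, ← Finset.mul_sum] using congrArg (u * ·) (h₁ a), rfl⟩)
    (by
      rintro _ w ⟨x₁, h₁, rfl⟩
      exact ⟨fun i => x₁ i * w, fun a => by simpa [mul_assoc] using h₁ (w * a), rfl⟩)
  have hI : ∀ z, z ∈ I ↔ _ := fun z => TwoSidedIdeal.mem_mk' ..
  exact (hI 1).mp (IsSimpleRing.one_mem_of_ne_zero_mem I hj ((hI _).mpr ⟨x, h, rfl⟩))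

theorem Algebra.IsCentral.eq_zero_of_forall_sum_mul_mul_eq_zero [Algebra.IsCentral K D]
    [IsSimpleRing D] {n : ℕ} {x y : Fin n → D} (hy : LinearIndependent K y)
    (h : ∀ a, ∑ i, x i * a * y i = 0) : x = 0 := by
  induction n with
  | zero => exact Subsingleton.elim _ _
  | succ n ih =>
    by_contra! hx
    obtain ⟨j, hj⟩ := Function.ne_iff.mp hx
    obtain ⟨u, hu, huj⟩ := IsSimpleRing.exists_sum_mul_mul_eq_zero_and_eq_one h hj
    -- the commutators `[uᵢ, c]` form a relation whose `j`-th coefficient vanishes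
    have hcomm : ∀ c a, ∑ i, (u i * c - c * u i) * a * y i = 0 := fun c a => calc
      _ = ∑ i, u i * (c * a) * y i - c * ∑ i, u i * a * y i := by
        simp only [Finset.mul_sum, ← Finset.sum_sub_distrib]
        congr! 1 with i
        noncomm_ring
      _ = 0 := by rw [hu, hu, mul_zero, sub_zero]
    have hcentral : ∀ i, u i ∈ Subalgebra.center K D := by
      intro i
      rcases Fin.eq_self_or_eq_succAbove j i with rfl | ⟨i, rfl⟩
      · simp [huj]
      · refine Subalgebra.mem_center_iff.mpr fun c => ?_
        have := ih (hy.comp _ (Fin.succAbove_right_injective (p := j))) fun a => by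
          simpa [Fin.sum_univ_succAbove _ j, huj] using hcomm c a
        exact (sub_eq_zero.mp (congrFun this i)).symm
    choose l hl using fun i => (Algebra.IsCentral.mem_center_iff K).mp (hcentral i)
    have hl0 := Fintype.linearIndependent_iff.mp hy l (by simpa [hl, Algebra.smul_def] using hu 1)
    simpa [huj, hl0] using hl j

theorem AlgHom.mulLeftRight_injective [Algebra.IsCentral K D] [IsSimpleRing D]
    [FiniteDimensional K D] : Function.Injective (AlgHom.mulLeftRight K D) := by
  refine (injective_iff_map_eq_zero _).mpr fun t ht => ?_
  let b := Module.finBasis K D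
  obtain ⟨c, rfl⟩ := TensorProduct.eq_repr_basis_right (b.map (MulOpposite.opLinearEquiv K)) t
  have hc : ⇑c = 0 :=
    Algebra.IsCentral.eq_zero_of_forall_sum_mul_mul_eq_zero b.linearIndependent fun a => by
    simpa [Finsupp.sum_fintype] using LinearMap.congr_fun ht a
  simp [Finsupp.coe_eq_zero.mp hc]

end CentralSimple

namespace IsArtinianRing

variable {B : Type*} [CommRing B] [IsArtinianRing B] [IsReduced B]

open scoped Classical in
noncomputable def factorIdempotent (I : MaximalSpectrum B) : B :=
  (equivPi B).symm (Pi.single I 1)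

theorem orthogonalIdempotents_factorIdempotent :
    OrthogonalIdempotents (factorIdempotent (B := B)) := by
  classical
  have := Fintype.ofFinite (MaximalSpectrum B)
  exact ((CompleteOrthogonalIdempotents.single _).map (equivPi B).symm.toRingHom).1

theorem factorIdempotent_ne_zero (I : MaximalSpectrum B) : factorIdempotent I ≠ 0 := by
  classical
  have : I.asIdeal.IsMaximal := I.isMaximal
  rw [factorIdempotent, map_ne_zero_iff _ (equivPi B).symm.injective]
  exact Pi.single_eq_zero_iff.not.mpr one_ne_zero

theorem exists_mul_eq_factorIdempotent {b : B} {I : MaximalSpectrum B} (hb : b ∉ I.asIdeal) :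
    ∃ c, c * b = factorIdempotent I := by
  classical
  have : I.asIdeal.IsMaximal := I.isMaximal
  obtain ⟨q, hq⟩ := Ideal.Quotient.exists_inv (Ideal.Quotient.eq_zero_iff_mem.not.mpr hb)
  refine ⟨(equivPi B).symm (Pi.single I q), (equivPi B).injective ?_⟩
  rw [map_mul, factorIdempotent, AlgEquiv.apply_symm_apply, AlgEquiv.apply_symm_apply]
  ext J
  rcases eq_or_ne J I with rfl | hJ
  · simp [equivPi_apply, mul_comm q, hq]
  · simp [hJ]

theorem eq_zero_of_forall_mem_maximal {b : B} (hb : ∀ I : MaximalSpectrum B, b ∈ I.asIdeal) :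
    b = 0 :=
  (equivPi B).injective <| funext fun I => by
    simpa [equivPi_apply] using Ideal.Quotient.eq_zero_iff_mem.mpr (hb I)

theorem exists_apply_injective {R M : Type*} [Semiring R] [AddCommGroup M] [Module R M]
    (ρ : B →+* Module.End R M) (hρ : Function.Injective ρ) :
    ∃ v : M, Function.Injective fun b => ρ b v := by
  classical
  have := Fintype.ofFinite (MaximalSpectrum B)
  have he := orthogonalIdempotents_factorIdempotent (B := B)
  have : ∀ I, ∃ w, ρ (factorIdempotent I) w ≠ 0 := fun I => by
    by_contra! h
    exact factorIdempotent_ne_zero I (hρ (by ext w; simp [h]))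
  choose w hw using this
  let v := ∑ I, ρ (factorIdempotent I) (w I)
  have hv : ∀ I, ρ (factorIdempotent I) v = ρ (factorIdempotent I) (w I) := fun I => by
    rw [map_sum, Finset.sum_eq_single I (fun J _ hJ => ?_) (by simp), ← Module.End.mul_apply,
      ← map_mul, he.idem I]
    rw [← Module.End.mul_apply, ← map_mul, he.ortho hJ.symm, map_zero, LinearMap.zero_apply]
  refine ⟨v, fun b₁ b₂ (h : ρ b₁ v = ρ b₂ v) =>
    sub_eq_zero.mp (eq_zero_of_forall_mem_maximal fun I => ?_)⟩
  by_contra hb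
  obtain ⟨c, hc⟩ := exists_mul_eq_factorIdempotent hb
  apply hw I
  rw [← hv, ← hc, map_mul, Module.End.mul_apply, map_sub, LinearMap.sub_apply, h, sub_self,
    map_zero]

end IsArtinianRing

section

variable {k F A}

noncomputable def mulLeftRightOfComm (ι : F →ₐ[k] A) : F ⊗[k] F →ₐ[k] Module.End k A :=
  (AlgHom.mulLeftRight k A).comp
    (Algebra.TensorProduct.map ι (ι.toOpposite fun x y => (Commute.all x y).map ι))

theorem mulLeftRightOfComm_injective [Algebra.IsCentral k A] [IsSimpleRing A]
    [FiniteDimensional k A] {ι : F →ₐ[k] A} (hι : Function.Injective ι) :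
    Function.Injective (mulLeftRightOfComm ι) :=
  AlgHom.mulLeftRight_injective.comp <| TensorProduct.map_injective_of_flat_flat _ _ hι
    (MulOpposite.op_injective.comp hι)

theorem Phi_apply (ι : F →ₐ[k] A) (v : A) (t : F ⊗[k] F) :
    Phi k F A ι v t = mulLeftRightOfComm ι t v := by
  induction t with
  | zero => simp
  | tmul f g => simp [Phi, mulLeftRightOfComm]
  | add s t hs ht => simp [hs, ht]

end

theorem exists_v_phi_bijective
    [FiniteDimensional k A] [Algebra.IsCentral k A] [IsSimpleRing A]
    [FiniteDimensional k F] [Algebra.Etale k F]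
    (ι : F →ₐ[k] A) (hι : Function.Injective ι)
    (hmax : Module.finrank k F * Module.finrank k F = Module.finrank k A) :
    ∃ v : A, Function.Bijective (Phi k F A ι v) := by
  have : Algebra.Etale k (F ⊗[k] F) := .comp k F _
  have : IsReduced (F ⊗[k] F) := Algebra.FormallyUnramified.isReduced_of_field k _
  have : IsArtinianRing (F ⊗[k] F) := .of_finite k _
  obtain ⟨v, hv⟩ := IsArtinianRing.exists_apply_injective (mulLeftRightOfComm ι).toRingHom
    (mulLeftRightOfComm_injective hι)
  have hinj : Function.Injective (Phi k F A ι v) := fun s t h =>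
    hv (by rwa [Phi_apply, Phi_apply] at h)
  have hdim : Module.finrank k (F ⊗[k] F) = Module.finrank k A := by
    rw [Module.finrank_tensorProduct, hmax]
  exact ⟨v, hinj, (LinearMap.injective_iff_surjective_of_finrank_eq_finrank hdim).mp hinj⟩
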